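/- Let d be an odd positive integer that is not prime, Ω a set with d elements, k ≥ 3, and let 𝒟 = {D₁,…,Dₖ} be partitions of d with Σᵢ ν(Dᵢ) = d − 1. Let αᵢ ∈ Dᵢ and ω be permutations of Ω with ω² = α₁α₂⋯αₖ such that G = ⟨α₁,…,αₖ, ω⟩ is transitive. If gcd(D₁) (the gcd of the cycle lengths of α₁) is a proper divisor of d greater than 1 and the subgroup ⟨α₁,…,αₖ⟩ is not transitive on Ω, then G is imprimitive. -/

import Mathlib

/-- The cycle type of a permutation, including fixed points as parts equal to `1`. -/
def fullCycleType {Ω : Type*} [Fintype Ω] [DecidableEq Ω] (σ : Equiv.Perm Ω) : Multiset ℕ :=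
  σ.cycleType + Multiset.replicate (Fintype.card Ω - σ.support.card) 1

/-- A multiset of positive integers summing to `d`, i.e. a partition of `d`. -/
def IsPartitionOf (d : ℕ) (D : Multiset ℕ) : Prop :=
  (∀ x ∈ D, 0 < x) ∧ D.sum = d

/-- The defect `ν(D) = Σⱼ (dⱼ − 1)` of a partition. -/
def nu (D : Multiset ℕ) : ℕ := (D.map (· - 1)).sum

/-- The partition `[2,…,2,1]` of an odd number `d`, with `(d−1)/2` parts equal to `2`. -/
def twosAndOne (d : ℕ) : Multiset ℕ := Multiset.replicate ((d - 1) / 2) 2 + {1}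

/-- A subgroup of the symmetric group on `Ω` is transitive. -/
def SubgroupTransitive {Ω : Type*} (G : Subgroup (Equiv.Perm Ω)) : Prop :=
  ∀ x y : Ω, ∃ g ∈ G, g x = y

/-- `Λ` is a block for the subgroup `G` of the symmetric group on `Ω`. -/
def IsBlockOf {Ω : Type*} (G : Subgroup (Equiv.Perm Ω)) (Λ : Set Ω) : Prop :=
  Λ.Nonempty ∧ ∀ g ∈ G, (⇑g '' Λ = Λ ∨ Disjoint (⇑g '' Λ) Λ)

/-- A block is trivial if it is a singleton or the whole set. -/
def TrivialBlock {Ω : Type*} (Λ : Set Ω) : Prop :=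
  (∃ x, Λ = {x}) ∨ Λ = Set.univ

/-- A subgroup of the symmetric group is primitive: transitive with only trivial blocks. -/
def SubgroupPrimitive {Ω : Type*} (G : Subgroup (Equiv.Perm Ω)) : Prop :=
  SubgroupTransitive G ∧ ∀ Λ : Set Ω, IsBlockOf G Λ → TrivialBlock Λ

/-- A subgroup of the symmetric group is imprimitive: transitive but not primitive. -/
def SubgroupImprimitive {Ω : Type*} (G : Subgroup (Equiv.Perm Ω)) : Prop :=
  SubgroupTransitive G ∧ ¬ SubgroupPrimitive G

/-- The orbit of `x` under a subgroup `G` of the symmetric group on `Ω`. -/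
def orbSet {Ω : Type*} (G : Subgroup (Equiv.Perm Ω)) (x : Ω) : Set Ω :=
  {y | ∃ g ∈ G, g x = y}

/-- The number of orbits of a subgroup `G` of the symmetric group on `Ω`. -/
noncomputable def numOrbits {Ω : Type*} (G : Subgroup (Equiv.Perm Ω)) : ℕ :=
  Nat.card (Set.range (orbSet G))

/-!
Let `m = gcd(D₁)`; it is odd since it divides `d`. Lift the generators to permutations of
`Ω × ℤ/m`: `α₁ ↦ (α₁, +2)`, `αᵢ ↦ (αᵢ, 0)` for `i ≥ 2` and `ω ↦ (ω, +1)`. The relation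
`ω² = α₁ ⋯ αₖ` survives, and since `m` divides every cycle length of `α₁`, each lifted `αᵢ` has
at least `m` times as many cycles as `αᵢ`.

The lifted group `Ĝ` is intransitive. Otherwise its subgroup `Δ` generated by
`α̂₁, …, α̂ₖ, ω̂⁻¹α̂ₖ⁻¹ω̂, …, ω̂⁻¹α̂₁⁻¹ω̂` would be transitive as well (it is normalised by `ω̂`,
contains `ω̂²`, and `dm` is odd). Ree's inequality `Σ (n − #cycles) ≥ 2 (n − 1)` for a
transitive product-one tuple on `n` points, applied to these `2k` permutations of `dm` points,
would then give `dm − 1 ≤ m (d − 1)`, i.e. `m ≤ 1`. Ree's inequality itself follows by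
factoring into transpositions and tracking how the number of cycles of a partial product and
the number of orbits of the partial group change with each transposition.

The fibre over `0` of the `Ĝ`-orbit of `(x₀, 0)` is then a block of `G`. It is not all of `Ω`,
since `ω̂` shifts the fibres by `1` and `Ĝ` is intransitive, and it is not a point, since the
fibres cover `Ω` and `m < d`.
-/

open Equiv Equiv.Perm Subgroup

namespace Setoid

variable {X : Type*}

def mergeClasses (s : Setoid X) (a b : X) : Setoid X where
  r x y := s x y ∨ (s x a ∧ s b y) ∨ (s x b ∧ s a y)
  iseqv := by
    refine ⟨fun x => .inl (s.refl x), ?_, ?_⟩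
    · rintro x y (h | ⟨h₁, h₂⟩ | ⟨h₁, h₂⟩)
      exacts [.inl (s.symm h), .inr (.inr ⟨s.symm h₂, s.symm h₁⟩),
        .inr (.inl ⟨s.symm h₂, s.symm h₁⟩)]
    · rintro x y z (h | ⟨h₁, h₂⟩ | ⟨h₁, h₂⟩) (h' | ⟨h₁', h₂'⟩ | ⟨h₁', h₂'⟩)
      exacts [.inl (s.trans h h'), .inr (.inl ⟨s.trans h h₁', h₂'⟩),
        .inr (.inr ⟨s.trans h h₁', h₂'⟩), .inr (.inl ⟨h₁, s.trans h₂ h'⟩),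
        .inr (.inl ⟨h₁, h₂'⟩), .inl (s.trans h₁ h₂'), .inr (.inr ⟨h₁, s.trans h₂ h'⟩),
        .inl (s.trans h₁ h₂'), .inr (.inr ⟨h₁, h₂'⟩)]

variable {s t : Setoid X} {a b : X}

lemma le_mergeClasses : s ≤ s.mergeClasses a b := fun _ _ h => .inl h

lemma map_of_le_surjective (h : s ≤ t) : Function.Surjective (map_of_le h) :=
  Quotient.ind fun x => ⟨Quotient.mk _ x, rfl⟩

lemma mergeClasses_le (hst : s ≤ t) (hab : t a b) : s.mergeClasses a b ≤ t := by
  rintro x y (h | ⟨h₁, h₂⟩ | ⟨h₁, h₂⟩)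
  exacts [hst h, t.trans (hst h₁) (t.trans hab (hst h₂)),
    t.trans (hst h₁) (t.trans (t.symm hab) (hst h₂))]

lemma mergeClasses_swap_apply [DecidableEq X] (s : Setoid X) (a b x : X) :
    s.mergeClasses a b x (swap a b x) := by
  rcases eq_or_ne x a with rfl | hxa
  · exact .inr (.inl ⟨s.refl x, by simp⟩)
  rcases eq_or_ne x b with rfl | hxb
  · exact .inr (.inr ⟨s.refl x, by simp⟩)
  · simp only [swap_apply_of_ne_of_ne hxa hxb]
    exact (s.mergeClasses a b).refl x

lemma card_quotient_eq_card_of_le_bot (h : s ≤ ⊥) :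
    Nat.card (Quotient s) = Nat.card X :=
  (Nat.card_eq_of_bijective _ ⟨fun _ _ hxy => h (Quotient.exact hxy),
    Quotient.mk_surjective⟩).symm

variable [Finite X]

lemma card_quotient_le_card (s : Setoid X) : Nat.card (Quotient s) ≤ Nat.card X :=
  Nat.card_le_card_of_surjective _ Quotient.mk_surjective

lemma card_quotient_le_of_le (h : s ≤ t) : Nat.card (Quotient t) ≤ Nat.card (Quotient s) :=
  Nat.card_le_card_of_surjective _ (map_of_le_surjective h)

lemma card_quotient_le_card_mergeClasses_add_one :
    Nat.card (Quotient s) ≤ Nat.card (Quotient (s.mergeClasses a b)) + 1 := by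
  classical
  have := Fintype.ofFinite (Quotient s)
  have := Fintype.ofFinite (Quotient (s.mergeClasses a b))
  simp only [Nat.card_eq_fintype_card]
  have hinj : Set.InjOn (map_of_le (le_mergeClasses (a := a) (b := b)))
      ((Finset.univ.erase (Quotient.mk s b) : Finset (Quotient s)) : Set (Quotient s)) := by
    refine Quotient.ind fun x hx => Quotient.ind fun y hy hxy => Quotient.sound ?_
    simp only [Finset.coe_erase, Set.mem_sdiff, Set.mem_singleton_iff] at hx hy
    rcases Quotient.exact hxy with h | ⟨-, h⟩ | ⟨h, -⟩
    exacts [h, (hy.2 (Quotient.sound (s.symm h))).elim, (hx.2 (Quotient.sound h)).elim]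
  have := Finset.card_le_card_of_injOn _ (fun _ _ => Finset.mem_univ _) hinj
  rw [Finset.card_erase_of_mem (Finset.mem_univ _)] at this
  simp only [Finset.card_univ] at this
  omega

lemma card_quotient_mergeClasses_lt (h : ¬ s a b) :
    Nat.card (Quotient (s.mergeClasses a b)) < Nat.card (Quotient s) := by
  have := Fintype.ofFinite (Quotient s)
  have := Fintype.ofFinite (Quotient (s.mergeClasses a b))
  simp only [Nat.card_eq_fintype_card]
  refine Fintype.card_lt_of_surjective_not_injective _
    (map_of_le_surjective (le_mergeClasses (a := a) (b := b))) fun hinj => h ?_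
  exact Quotient.exact (@hinj (Quotient.mk s a) (Quotient.mk s b)
    (Quotient.sound (.inr (.inl ⟨s.refl a, s.refl b⟩))))

end Setoid

section Orbits

variable {X : Type*}

lemma SubgroupTransitive.mono {G H : Subgroup (Perm X)} (hG : SubgroupTransitive G) (hGH : G ≤ H) :
    SubgroupTransitive H := fun x y =>
  let ⟨g, hg, hgx⟩ := hG x y
  ⟨g, hGH hg, hgx⟩

lemma subgroupTransitive_of_forall_exists {G : Subgroup (Perm X)} (x₀ : X)
    (h : ∀ y, ∃ g ∈ G, g x₀ = y) : SubgroupTransitive G := fun x y => by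
  obtain ⟨g, hg, rfl⟩ := h x
  obtain ⟨g', hg', rfl⟩ := h y
  exact ⟨g' * g⁻¹, mul_mem hg' (inv_mem hg), by simp⟩

lemma orbitRel_closure_le {S : Set (Perm X)} {R : Setoid X} (h : ∀ g ∈ S, ∀ x, R x (g x)) :
    MulAction.orbitRel (closure S) X ≤ R := by
  have key : ∀ g ∈ closure S, ∀ x, R x (g x) := fun g hg => by
    induction hg using closure_induction'' with
    | mem g hg => exact h g hg
    | inv_mem g hg => exact fun x => by simpa using R.symm (h g hg (g⁻¹ x))
    | one => exact R.refl
    | mul g g' _ _ ihg ihg' => exact fun x => R.trans (ihg' x) (ihg (g' x))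
  rintro _ y ⟨⟨g, hg⟩, rfl⟩
  exact R.symm (key g hg y)

lemma card_orbitRel_quotient_le_one [Finite X] {G : Subgroup (Perm X)}
    (hG : SubgroupTransitive G) : Nat.card (Quotient (MulAction.orbitRel G X)) ≤ 1 := by
  refine Finite.card_le_one_iff_subsingleton.2 ((MulAction.pretransitive_iff_subsingleton_quotient
    G X).1 ⟨fun x y => ?_⟩)
  obtain ⟨g, hg, hgx⟩ := hG x y
  exact ⟨⟨g, hg⟩, hgx⟩

end Orbits

namespace Equiv.Perm

variable {X : Type*}

-- Unlike `σ.cycleType`, this counts the fixed points as cycles.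
noncomputable def numCycles (σ : Perm X) : ℕ := Nat.card (Quotient (SameCycle.setoid σ))

lemma sameCycle_le_orbitRel {σ : Perm X} {H : Subgroup (Perm X)} (hσ : σ ∈ H) :
    SameCycle.setoid σ ≤ MulAction.orbitRel H X := by
  rintro x _ ⟨n, rfl⟩
  exact MulAction.orbitRel_apply.2 ⟨⟨(σ ^ n)⁻¹, inv_mem (zpow_mem hσ n)⟩, by simp [Perm.smul_def]⟩

lemma sameCycle_setoid_le {σ : Perm X} {R : Setoid X} (h : ∀ x, R x (σ x)) :
    SameCycle.setoid σ ≤ R :=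
  (sameCycle_le_orbitRel (mem_closure_singleton_self σ)).trans
    (orbitRel_closure_le fun _ hg x => (Set.mem_singleton_iff.1 hg) ▸ h x)

lemma numCycles_one : numCycles (1 : Perm X) = Nat.card X :=
  Setoid.card_quotient_eq_card_of_le_bot fun _ _ => sameCycle_one.1

lemma numCycles_le_card [Finite X] (σ : Perm X) : numCycles σ ≤ Nat.card X :=
  Setoid.card_quotient_le_card _

lemma numCycles_conj_inv (σ w : Perm X) : numCycles (w⁻¹ * σ⁻¹ * w) = numCycles σ :=
  Nat.card_congr <| Quotient.congr w fun x y => by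
    change (w⁻¹ * σ⁻¹ * w).SameCycle x y ↔ σ.SameCycle (w x) (w y)
    simpa using sameCycle_conj (f := σ⁻¹) (g := w⁻¹) (x := x) (y := y)

variable [DecidableEq X] [Finite X] {σ : Perm X} {a b : X}

lemma sameCycle_mul_swap_of_not_sameCycle (h : ¬ σ.SameCycle a b) :
    (σ * swap a b).SameCycle a b := by
  by_contra hτ
  have hwalk : ∀ n : ℕ, (σ * swap a b).SameCycle b ((σ ^ (n + 1)) a) := by
    intro n
    induction n with
    | zero => simpa using (σ * swap a b).sameCycle_apply_right.2 (SameCycle.refl _ b)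
    | succ n ih =>
      have hna : (σ ^ (n + 1)) a ≠ a := fun hx => hτ (hx ▸ ih).symm
      have hnb : (σ ^ (n + 1)) a ≠ b := fun hx =>
        h (hx ▸ sameCycle_pow_right.2 (SameCycle.refl σ a))
      have := (σ * swap a b).sameCycle_apply_right.2 ih
      rwa [mul_apply, swap_apply_of_ne_of_ne hna hnb, ← mul_apply, ← pow_succ'] at this
  have := hwalk (orderOf σ - 1)
  rw [Nat.sub_add_cancel (orderOf_pos σ), pow_orderOf_eq_one, one_apply] at this
  exact hτ this.symm

lemma numCycles_mul_swap_le : numCycles (σ * swap a b) ≤ numCycles σ + 1 := by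
  set τ := σ * swap a b
  have hle : SameCycle.setoid σ ≤ (SameCycle.setoid τ).mergeClasses a b := by
    refine sameCycle_setoid_le fun x => ?_
    have hσ : σ x = τ (swap a b x) := by simp [τ]
    exact hσ ▸ ((SameCycle.setoid τ).mergeClasses a b).trans
      (Setoid.mergeClasses_swap_apply _ a b x)
      (Setoid.le_mergeClasses (τ.sameCycle_apply_right.2 (SameCycle.refl _ _)))
  exact (Setoid.card_quotient_le_card_mergeClasses_add_one).trans
    (Nat.add_le_add_right (Setoid.card_quotient_le_of_le hle) 1)

lemma numCycles_mul_swap_lt (h : ¬ σ.SameCycle a b) : numCycles (σ * swap a b) < numCycles σ := by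
  set τ := σ * swap a b
  have hab : τ.SameCycle a b := sameCycle_mul_swap_of_not_sameCycle h
  have hle : SameCycle.setoid σ ≤ SameCycle.setoid τ := by
    refine sameCycle_setoid_le fun x => ?_
    have hσ : σ x = τ (swap a b x) := by simp [τ]
    have hx : τ.SameCycle x (swap a b x) := by
      rcases eq_or_ne x a with rfl | hxa
      · simpa using hab
      rcases eq_or_ne x b with rfl | hxb
      · simpa using hab.symm
      · rw [swap_apply_of_ne_of_ne hxa hxb]
    exact hσ ▸ hx.trans (τ.sameCycle_apply_right.2 (SameCycle.refl _ _))
  exact (Setoid.card_quotient_le_of_le (Setoid.mergeClasses_le hle hab)).trans_lt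
    (Setoid.card_quotient_mergeClasses_lt h)

lemma exists_swap_list_prod_eq (σ : Perm X) :
    ∃ l : List (Perm X), (∀ τ ∈ l, τ.IsSwap) ∧ l.prod = σ ∧
      l.length + numCycles σ ≤ Nat.card X := by
  induction hN : Nat.card X - numCycles σ using Nat.strong_induction_on generalizing σ with
  | _ N ih =>
  by_cases hσ : σ = 1
  · exact ⟨[], by simp, by simp [hσ], by simpa using numCycles_le_card σ⟩
  obtain ⟨a, ha⟩ : ∃ a, σ a ≠ a := not_forall.1 fun h => hσ (Equiv.ext h)
  -- splitting off the transposition `(a σa)` leaves `σa` fixed, so one cycle is split in two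
  set τ := σ * swap a (σ a)
  have hfix : τ (σ a) = σ a := by simp [τ]
  have hlt : numCycles σ < numCycles τ := by
    simpa [τ] using numCycles_mul_swap_lt (a := a) (b := σ a) fun h => ha (h.eq_of_right hfix).symm
  obtain ⟨l, hswap, hprod, hlen⟩ :=
    ih _ (by have := numCycles_le_card τ; omega) τ rfl
  refine ⟨l ++ [swap a (σ a)], fun g hg => ?_, by simp [hprod, τ], by simp; omega⟩
  rcases List.mem_append.1 hg with hg | hg
  · exact hswap g hg
  · exact List.mem_singleton.1 hg ▸ ⟨a, σ a, ha.symm, rfl⟩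

lemma numCycles_prod_add_card_le (l : List (Perm X)) (hl : ∀ τ ∈ l, τ.IsSwap) :
    numCycles l.prod + Nat.card X ≤
      l.length + 2 * Nat.card (Quotient (MulAction.orbitRel (closure {τ | τ ∈ l}) X)) := by
  induction l using List.reverseRecOn with
  | nil =>
    have : Nat.card (Quotient (MulAction.orbitRel (closure {τ | τ ∈ ([] : List (Perm X))}) X)) =
        Nat.card X := by
      refine Setoid.card_quotient_eq_card_of_le_bot fun x y ⟨g, hg⟩ => ?_
      have hg1 : (g : Perm X) = 1 := by simpa using g.2
      change g • y = x at hg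
      rw [← hg, Subgroup.smul_def, hg1, one_smul]
    simp [numCycles_one, this]
    omega
  | append_singleton l τ ih =>
    obtain ⟨a, b, -, rfl⟩ := hl τ (by simp)
    have ih := ih fun τ hτ => hl τ (by simp [hτ])
    have hset : {g | g ∈ l ++ [swap a b]} = insert (swap a b) {g | g ∈ l} := by
      ext; simp [or_comm]
    rw [List.prod_append, List.prod_singleton, List.length_append, hset]
    set t := MulAction.orbitRel (closure {g | g ∈ l}) X
    have horb : MulAction.orbitRel (closure (insert (swap a b) {g | g ∈ l})) X ≤
        t.mergeClasses a b := by
      refine orbitRel_closure_le fun g hg x => ?_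
      rcases hg with rfl | hg
      · exact t.mergeClasses_swap_apply a b x
      · exact Setoid.le_mergeClasses (MulAction.orbitRel_apply.2
          ⟨⟨g⁻¹, inv_mem (subset_closure hg)⟩, by simp [Perm.smul_def]⟩)
    by_cases hab : t a b
    · have := Setoid.card_quotient_le_of_le (horb.trans (Setoid.mergeClasses_le le_rfl hab))
      have := numCycles_mul_swap_le (σ := l.prod) (a := a) (b := b)
      simp only [List.length_singleton]
      omega
    · have hcyc : ¬ l.prod.SameCycle a b := fun h =>
        hab (sameCycle_le_orbitRel (list_prod_mem fun g hg => subset_closure hg) h)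
      have := numCycles_mul_swap_lt hcyc
      have := Setoid.card_quotient_le_of_le horb
      have := t.card_quotient_le_card_mergeClasses_add_one (a := a) (b := b)
      simp only [List.length_singleton]
      omega

theorem two_mul_card_le_length_add_two (l : List (Perm X)) (hl : ∀ τ ∈ l, τ.IsSwap)
    (hprod : l.prod = 1) (htrans : SubgroupTransitive (closure {τ | τ ∈ l})) :
    2 * Nat.card X ≤ l.length + 2 := by
  have := numCycles_prod_add_card_le l hl
  have := card_orbitRel_quotient_le_one htrans
  rw [hprod, numCycles_one] at *
  omega

-- Ree's inequality
theorem two_mul_card_le_sum_add_two (l : List (Perm X)) (hprod : l.prod = 1)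
    (htrans : SubgroupTransitive (closure {σ | σ ∈ l})) :
    2 * Nat.card X ≤ (l.map fun σ => Nat.card X - numCycles σ).sum + 2 := by
  choose f hswap hfprod hlen using exists_swap_list_prod_eq (X := X)
  have hle : (l.map f).flatten.length ≤ (l.map fun σ => Nat.card X - numCycles σ).sum := by
    rw [List.length_flatten, List.map_map]
    exact List.sum_le_sum fun σ _ => by have := hlen σ; simp only [Function.comp_apply]; omega
  refine (two_mul_card_le_length_add_two (l.map f).flatten (fun τ hτ => ?_) ?_ ?_).trans
    (by omega)
  · obtain ⟨_, hl', hτ⟩ := List.mem_flatten.1 hτ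
    obtain ⟨σ, -, rfl⟩ := List.mem_map.1 hl'
    exact hswap σ τ hτ
  · simp [List.prod_flatten, List.map_map, Function.comp_def, hfprod, hprod]
  · refine htrans.mono ((closure_le _).2 fun σ hσ => ?_)
    rw [← hfprod σ]
    exact list_prod_mem fun τ hτ => subset_closure (List.mem_flatten.2 ⟨f σ, by simpa using
      ⟨σ, hσ, rfl⟩, hτ⟩)

end Equiv.Perm

lemma Subgroup.mem_normalizer_closure {G : Type*} [Group G] {S : Set G} {w : G}
    (h₁ : ∀ g ∈ S, w * g * w⁻¹ ∈ closure S) (h₂ : ∀ g ∈ S, w⁻¹ * g * w ∈ closure S) :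
    w ∈ normalizer (closure S : Set G) := by
  rw [mem_normalizer_iff_map_conj_eq, MonoidHom.map_closure]
  refine le_antisymm ((closure_le _).2 ?_) ((closure_le _).2 fun g hg => ?_)
  · rintro _ ⟨g, hg, rfl⟩
    exact h₁ g hg
  · rw [← MonoidHom.map_closure]
    exact ⟨_, h₂ g hg, by simp [mul_assoc]⟩

section DoubleCover

variable {X : Type*}

lemma apply_mem_orbSet {Δ : Subgroup (Perm X)} {δ : Perm X} (hδ : δ ∈ Δ) {q x : X}
    (hx : x ∈ orbSet Δ q) : δ x ∈ orbSet Δ q := by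
  obtain ⟨δ', hδ', rfl⟩ := hx
  exact ⟨δ * δ', mul_mem hδ hδ', rfl⟩

theorem subgroupTransitive_of_mem_normalizer [Finite X] (hodd : Odd (Nat.card X))
    {Δ : Subgroup (Perm X)} {w : Perm X} (hw : w ∈ normalizer (Δ : Set (Perm X))) (hw2 : w ^ 2 ∈ Δ)
    (htrans : SubgroupTransitive (closure (insert w (Δ : Set (Perm X))))) :
    SubgroupTransitive Δ := by
  have hconj : ∀ δ ∈ Δ, w * δ * w⁻¹ ∈ Δ := fun δ hδ => (mem_normalizer_iff.1 hw δ).1 hδ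
  have hconj' : ∀ δ ∈ Δ, w⁻¹ * δ * w ∈ Δ := fun δ hδ => by
    simpa using (mem_normalizer_iff.1 (inv_mem hw) δ).1 hδ
  obtain ⟨p⟩ : Nonempty X := Nat.card_pos_iff.1 hodd.pos |>.1
  set A := orbSet Δ p
  set B := orbSet Δ (w p)
  have hA : ∀ x ∈ A, w x ∈ B ∧ w⁻¹ x ∈ B := by
    rintro _ ⟨δ, hδ, rfl⟩
    refine ⟨⟨w * δ * w⁻¹, hconj δ hδ, by simp⟩,
      ⟨w⁻¹ * δ * w * (w ^ 2)⁻¹, mul_mem (hconj' δ hδ) (inv_mem hw2), ?_⟩⟩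
    simp [sq]
  have hB : ∀ x ∈ B, w x ∈ A ∧ w⁻¹ x ∈ A := by
    rintro _ ⟨δ, hδ, rfl⟩
    refine ⟨⟨w * δ * w⁻¹ * w ^ 2, mul_mem (hconj δ hδ) hw2, ?_⟩,
      ⟨w⁻¹ * δ * w, hconj' δ hδ, by simp⟩⟩
    simp [sq]
  -- `⟨Δ, w⟩` permutes the two orbits `A` and `B = w A`
  have hcover : ∀ x, x ∈ A ∨ x ∈ B := by
    have key : ∀ g ∈ closure (insert w (Δ : Set (Perm X))), ∀ x, x ∈ A ∨ x ∈ B →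
        g x ∈ A ∨ g x ∈ B := fun g hg => by
      induction hg using closure_induction'' with
      | mem g hg =>
        rcases hg with rfl | hg
        · rintro x (hx | hx)
          exacts [.inr (hA x hx).1, .inl (hB x hx).1]
        · rintro x (hx | hx)
          exacts [.inl (apply_mem_orbSet hg hx), .inr (apply_mem_orbSet hg hx)]
      | inv_mem g hg =>
        rcases hg with rfl | hg
        · rintro x (hx | hx)
          exacts [.inr (hA x hx).2, .inl (hB x hx).2]
        · rintro x (hx | hx)
          exacts [.inl (apply_mem_orbSet (inv_mem hg) hx),
            .inr (apply_mem_orbSet (inv_mem hg) hx)]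
      | one => simp
      | mul g g' _ _ ihg ihg' => exact fun x hx => ihg _ (ihg' x hx)
    intro x
    obtain ⟨g, hg, rfl⟩ := htrans p x
    exact key g hg p (.inl ⟨1, one_mem _, rfl⟩)
  by_cases hwp : w p ∈ A
  · refine subgroupTransitive_of_forall_exists p fun x => (hcover x).elim id ?_
    rintro ⟨δ, hδ, rfl⟩
    obtain ⟨δ', hδ', hδ'p⟩ := hwp
    exact ⟨δ * δ', mul_mem hδ hδ', by simp [hδ'p]⟩
  · have hdisj : Disjoint A B := Set.disjoint_left.2 fun x hxA hxB => hwp <| by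
      obtain ⟨δ, hδ, rfl⟩ := hxB
      simpa using apply_mem_orbSet (inv_mem hδ) hxA
    have hcard : A.ncard = B.ncard :=
      le_antisymm (Set.ncard_le_ncard_of_injOn w (fun x hx => (hA x hx).1) w.injective.injOn)
        (Set.ncard_le_ncard_of_injOn w (fun x hx => (hB x hx).1) w.injective.injOn)
    have hunion : A ∪ B = Set.univ := Set.eq_univ_of_forall hcover
    have := Set.ncard_union_eq hdisj
    rw [hunion, Set.ncard_univ] at this
    obtain ⟨r, hr⟩ := hodd
    omega

variable [Finite X] [DecidableEq X]

theorem card_le_sum_sub_numCycles_add_one (hodd : Odd (Nat.card X)) {k : ℕ}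
    (σ : Fin k → Perm X) (w : Perm X) (hw : w ^ 2 = (List.ofFn σ).prod)
    (htrans : SubgroupTransitive (closure (Set.range σ ∪ {w}))) :
    Nat.card X ≤ ∑ i, (Nat.card X - numCycles (σ i)) + 1 := by
  set l := List.ofFn σ
  -- `L` has product `1` and generates a subgroup of index at most `2` in `⟨σ, w⟩`
  set L := l ++ (l.reverse.map fun g => w⁻¹ * g⁻¹ * w)
  have hmem : ∀ g, g ∈ L ↔ g ∈ l ∨ ∃ h ∈ l, w⁻¹ * h⁻¹ * w = g := by simp [L]
  have hl : ∀ g ∈ l, g ∈ closure {g | g ∈ L} := fun g hg => subset_closure ((hmem g).2 (.inl hg))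
  have hl' : ∀ g ∈ l, w⁻¹ * g⁻¹ * w ∈ closure {g | g ∈ L} := fun g hg =>
    subset_closure ((hmem _).2 (.inr ⟨g, hg, rfl⟩))
  have hw2 : w ^ 2 ∈ closure {g | g ∈ L} := hw ▸ list_prod_mem hl
  have hprod : L.prod = 1 := by
    have : (l.reverse.map fun g => w⁻¹ * g⁻¹ * w).prod = w⁻¹ * l.prod⁻¹ * w := by
      have hconj : (l.reverse.map fun g => w⁻¹ * g⁻¹ * w) =
          (l.map (·⁻¹)).reverse.map (MulAut.conj w⁻¹) := by
        simp [List.map_reverse, Function.comp_def]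
      rw [hconj, ← map_list_prod, ← List.prod_inv_reverse]
      simp
    rw [List.prod_append, this, ← hw]
    group
  have hsum : (L.map fun g => Nat.card X - numCycles g).sum =
      2 * ∑ i, (Nat.card X - numCycles (σ i)) := by
    simp [L, l, numCycles_conj_inv, List.sum_ofFn, two_mul, Function.comp_def]
  have hnormal : w ∈ normalizer (closure {g | g ∈ L} : Set (Perm X)) := by
    refine mem_normalizer_closure (fun g hg => ?_) (fun g hg => ?_) <;>
      obtain hg | ⟨h, hh, rfl⟩ := (hmem g).1 hg
    · simpa [sq, mul_assoc] using mul_mem (mul_mem hw2 (inv_mem (hl' g hg))) (inv_mem hw2)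
    · simpa [mul_assoc] using inv_mem (hl h hh)
    · simpa [mul_assoc] using inv_mem (hl' g hg)
    · simpa [sq, mul_assoc] using mul_mem (mul_mem (inv_mem hw2) (inv_mem (hl h hh))) hw2
  have htransL : SubgroupTransitive (closure {g | g ∈ L}) := by
    refine subgroupTransitive_of_mem_normalizer hodd hnormal hw2 (htrans.mono ?_)
    refine closure_mono (Set.union_subset ?_ (by simp))
    rintro _ ⟨i, rfl⟩
    exact Set.mem_insert_of_mem _ (hl _ (List.mem_ofFn.2 ⟨i, rfl⟩))
  have := two_mul_card_le_sum_add_two L hprod htransL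
  omega

end DoubleCover

section CycleType

variable {X : Type*} [Fintype X] [DecidableEq X]

lemma nu_add_card {D : Multiset ℕ} (hD : ∀ x ∈ D, 0 < x) : nu D + D.card = D.sum := by
  induction D using Multiset.induction_on with
  | empty => simp [nu]
  | cons a D ih =>
    have ha := hD a (Multiset.mem_cons_self a D)
    have := ih fun x hx => hD x (Multiset.mem_cons_of_mem hx)
    simp only [nu, Multiset.map_cons, Multiset.sum_cons, Multiset.card_cons] at this ⊢
    omega

lemma card_fullCycleType_le_numCycles (σ : Perm X) : (fullCycleType σ).card ≤ numCycles σ := by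
  have hpt : ∀ c ∈ σ.cycleFactorsFinset, ∃ x, σ x ≠ x ∧ σ.cycleOf x = c := fun c hc => by
    obtain ⟨x, hx⟩ := (mem_cycleFactorsFinset_iff.1 hc).1.nonempty_support
    exact ⟨x, mem_support.1 (mem_cycleFactorsFinset_support_le hc hx),
      (cycle_is_cycleOf hx hc).symm⟩
  choose! pt hpt_move hpt_eq using hpt
  let f : σ.cycleFactorsFinset ⊕ Function.fixedPoints σ → Quotient (SameCycle.setoid σ) :=
    Sum.elim (fun c => Quotient.mk _ (pt c.1 c.2)) (fun x => Quotient.mk _ x)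
  have hf : Function.Injective f := by
    rintro (⟨c, hc⟩ | ⟨x, hx⟩) (⟨c', hc'⟩ | ⟨x', hx'⟩) h <;>
      have h : σ.SameCycle _ _ := Quotient.exact h
    · simp only [Sum.inl.injEq, Subtype.mk.injEq]
      rw [← hpt_eq c hc, ← hpt_eq c' hc', h.cycleOf_eq]
    · exact (hpt_move c hc (h.eq_of_right hx' ▸ hx')).elim
    · exact (hpt_move c' hc' (h.eq_of_left hx ▸ hx)).elim
    · simp only [Sum.inr.injEq, Subtype.mk.injEq]
      exact h.eq_of_left hx
  calc (fullCycleType σ).card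
      = Nat.card (σ.cycleFactorsFinset ⊕ Function.fixedPoints σ) := by
        rw [Nat.card_sum, Nat.card_eq_fintype_card (α := Function.fixedPoints σ), card_fixedPoints,
          sum_cycleType]
        simp [fullCycleType, cycleType_def]
    _ ≤ numCycles σ := Nat.card_le_card_of_injective f hf

lemma card_sub_numCycles_le_nu (σ : Perm X) : Nat.card X - numCycles σ ≤ nu (fullCycleType σ) := by
  have hparts : fullCycleType σ = σ.partition.parts := by rw [fullCycleType, parts_partition]
  have hnu := nu_add_card fun _ hx => σ.partition.parts_pos (hparts ▸ hx)
  have hcyc := card_fullCycleType_le_numCycles σ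
  rw [hparts] at hnu hcyc ⊢
  rw [σ.partition.parts_sum] at hnu
  rw [Nat.card_eq_fintype_card]
  omega

lemma gcd_fullCycleType_dvd {σ : Perm X} {n : ℕ} {x : X} (h : (σ ^ n) x = x) :
    (fullCycleType σ).gcd ∣ n := by
  by_cases hx : σ x = x
  · have hlt : σ.support.card < Fintype.card X :=
      Finset.card_lt_univ_of_notMem (notMem_support.2 hx)
    have : 1 ∈ fullCycleType σ :=
      Multiset.mem_add.2 (.inr (Multiset.mem_replicate.2 ⟨by omega, rfl⟩))
    exact (Multiset.gcd_dvd this).trans (one_dvd n)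
  · have hc := isCycle_cycleOf σ hx
    have hmem : (σ.cycleOf x).support.card ∈ fullCycleType σ := by
      refine Multiset.mem_add.2 (.inl ?_)
      rw [cycleType_def, Multiset.mem_map]
      exact ⟨σ.cycleOf x, cycleOf_mem_cycleFactorsFinset_iff.2 (mem_support.2 hx), rfl⟩
    refine (Multiset.gcd_dvd hmem).trans (hc.orderOf ▸ orderOf_dvd_of_pow_eq_one ?_)
    exact (hc.pow_eq_one_iff' (x := x) (by simpa using hx)).2 (by simpa using h)

end CycleType

section Lift

lemma List.prod_ofFn_mk {M N : Type*} [Monoid M] [CommMonoid N] {k : ℕ} (f : Fin k → M)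
    (g : Fin k → N) : (List.ofFn fun i => (f i, g i)).prod = ((List.ofFn f).prod, ∏ i, g i) := by
  refine Prod.ext ?_ ?_
  · simpa [List.map_ofFn, Function.comp_def] using
      (MonoidHom.fst M N).map_list_prod (List.ofFn fun i => (f i, g i))
  · simpa [List.map_ofFn, Function.comp_def, List.prod_ofFn] using
      (MonoidHom.snd M N).map_list_prod (List.ofFn fun i => (f i, g i))

variable {Ω : Type*} {m : ℕ}

def liftPerm : Perm Ω × Multiplicative (ZMod m) →* Perm (Ω × ZMod m) where
  toFun p := p.1.prodCongr (Equiv.addLeft p.2.toAdd)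
  map_one' := by ext <;> simp
  map_mul' p q := by ext <;> simp [add_assoc]

@[simp]
lemma liftPerm_apply (p : Perm Ω × Multiplicative (ZMod m)) (x : Ω) (e : ZMod m) :
    liftPerm p (x, e) = (p.1 x, p.2.toAdd + e) := rfl

lemma mul_numCycles_le_numCycles_liftPerm [Finite Ω] [NeZero m]
    (p : Perm Ω × Multiplicative (ZMod m))
    (hp : ∀ (n : ℕ) x, (p.1 ^ n) x = x → (n : ZMod m) * p.2.toAdd = 0) :
    m * numCycles p.1 ≤ numCycles (liftPerm p) := by
  have hpow : ∀ (n : ℕ) x e,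
      (liftPerm p ^ n) (x, e) = ((p.1 ^ n) x, (n : ZMod m) * p.2.toAdd + e) :=
    fun n x e => by
      rw [← map_pow]
      simp only [liftPerm_apply, Prod.pow_fst, Prod.pow_snd, toAdd_pow, nsmul_eq_mul]
  let f : Quotient (SameCycle.setoid p.1) × ZMod m → Quotient (SameCycle.setoid (liftPerm p)) :=
    fun qe => Quotient.mk _ (qe.1.out, qe.2)
  have hf : Function.Injective f := by
    rintro ⟨q, e⟩ ⟨q', e'⟩ h
    obtain ⟨n, hn⟩ := (Quotient.exact h : SameCycle _ _ _).exists_nat_pow_eq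
    rw [hpow, Prod.mk.injEq] at hn
    obtain rfl : q = q' := by
      rw [← q.out_eq, ← q'.out_eq]
      exact Quotient.sound (hn.1 ▸ sameCycle_pow_right.2 (SameCycle.refl p.1 q.out))
    simpa [hp n _ hn.1] using hn.2
  have := Nat.card_le_card_of_injective f hf
  rwa [Nat.card_prod, Nat.card_zmod, mul_comm] at this

theorem not_subgroupTransitive_map_liftPerm [Finite Ω] [DecidableEq Ω] [NeZero m] (hm : 1 < m)
    (hodd : Odd (Nat.card Ω * m)) {k : ℕ} (p : Fin k → Perm Ω × Multiplicative (ZMod m))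
    (w : Perm Ω × Multiplicative (ZMod m)) (hw : w ^ 2 = (List.ofFn p).prod)
    (hdefect : ∑ i, (Nat.card Ω - numCycles (p i).1) ≤ Nat.card Ω - 1)
    (hp : ∀ i (n : ℕ) x, ((p i).1 ^ n) x = x → (n : ZMod m) * (p i).2.toAdd = 0) :
    ¬ SubgroupTransitive ((closure (Set.range p ∪ {w})).map liftPerm) := by
  intro htrans
  have hpos : 0 < Nat.card Ω := Nat.pos_of_ne_zero fun h => by simp [h] at hodd
  have hbound := card_le_sum_sub_numCycles_add_one (by rwa [Nat.card_prod, Nat.card_zmod])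
    (liftPerm ∘ p) (liftPerm w) (by rw [← map_pow, hw, map_list_prod, List.map_ofFn]) <| by
      rwa [MonoidHom.map_closure, Set.image_union, ← Set.range_comp, Set.image_singleton] at htrans
  have hsum : ∑ i, (Nat.card Ω * m - numCycles (liftPerm (p i))) ≤ m * (Nat.card Ω - 1) := calc
    _ ≤ ∑ i, m * (Nat.card Ω - numCycles (p i).1) := Finset.sum_le_sum fun i _ => by
        rw [Nat.mul_sub, mul_comm (Nat.card Ω)]
        exact Nat.sub_le_sub_left (mul_numCycles_le_numCycles_liftPerm (p i) (hp i)) _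
    _ ≤ m * (Nat.card Ω - 1) := by
        rw [← Finset.mul_sum]
        exact Nat.mul_le_mul_left m hdefect
  rw [Nat.card_prod, Nat.card_zmod] at hbound
  simp only [Function.comp_apply] at hbound
  rw [Nat.mul_sub_one, mul_comm (Nat.card Ω)] at *
  have := Nat.le_mul_of_pos_right m hpos
  omega

end Lift

section Block

variable {Ω : Type*} {m : ℕ}

open Multiplicative in
theorem not_subgroupPrimitive_of_not_subgroupTransitive_map_liftPerm [Finite Ω] [NeZero m]
    (H : Subgroup (Perm Ω × Multiplicative (ZMod m))) (hm : m < Nat.card Ω)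
    (hshift : ∃ g, (g, ofAdd 1) ∈ H) (hlift : ¬ SubgroupTransitive (H.map liftPerm)) :
    ¬ SubgroupPrimitive (H.map (MonoidHom.fst _ _)) := by
  rintro ⟨htrans, hblocks⟩
  obtain ⟨x₀⟩ : Nonempty Ω := Nat.card_pos_iff.1 (by omega) |>.1
  -- `fiber c` is the set of `y` such that `(y, c)` lies in the orbit of `(x₀, 0)` under the lift
  set fiber : ZMod m → Set Ω := fun c => {y | ∃ p ∈ H, p.1 x₀ = y ∧ p.2 = ofAdd c}
  have himage : ∀ p ∈ H, ∀ c, p.1 '' fiber c = fiber (toAdd p.2 + c) := by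
    refine fun p hp c => Set.eq_of_subset_of_subset ?_ ?_
    · rintro _ ⟨_, ⟨q, hq, rfl, hqc⟩, rfl⟩
      exact ⟨p * q, mul_mem hp hq, rfl, by simp [hqc]⟩
    · rintro _ ⟨q, hq, rfl, hqc⟩
      exact ⟨(p⁻¹ * q).1 x₀, ⟨p⁻¹ * q, mul_mem (inv_mem hp) hq, rfl, by simp [hqc]⟩, by simp⟩
  have hsub : ∀ c c', ∀ y ∈ fiber c, y ∈ fiber c' → fiber c ⊆ fiber c' := by
    rintro c c' _ ⟨p, hp, rfl, hpc⟩ ⟨q, hq, hqy, hqc⟩ _ ⟨r, hr, rfl, hrc⟩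
    exact ⟨r * p⁻¹ * q, mul_mem (mul_mem hr (inv_mem hp)) hq, by simp [hqy],
      by simp [hpc, hqc, hrc]⟩
  have hreach : ∀ y, ∃ p ∈ H, p.1 x₀ = y := fun y => by
    obtain ⟨_, ⟨p, hp, rfl⟩, hy⟩ := htrans x₀ y
    exact ⟨p, hp, hy⟩
  have hblock : IsBlockOf (H.map (MonoidHom.fst _ _)) (fiber 0) := by
    refine ⟨⟨x₀, 1, one_mem _, rfl, rfl⟩, ?_⟩
    rintro _ ⟨p, hp, rfl⟩
    rw [MonoidHom.coe_fst, himage p hp, add_zero]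
    by_cases hdisj : Disjoint (fiber (toAdd p.2)) (fiber 0)
    · exact .inr hdisj
    · obtain ⟨y, hy, hy'⟩ := Set.not_disjoint_iff.1 hdisj
      exact .inl ((hsub _ _ y hy hy').antisymm (hsub _ _ y hy' hy))
  rcases hblocks _ hblock with ⟨x, hx⟩ | huniv
  · -- every fiber is a translate of the singleton `fiber 0`, so `y ↦ c` with `y ∈ fiber c`
    -- is injective
    choose P hPH hPy using hreach
    have hmem : ∀ y, y ∈ fiber (toAdd (P y).2) := fun y => ⟨P y, hPH y, hPy y, rfl⟩
    have hsingle : ∀ y, fiber (toAdd (P y).2) = {(P y).1 x} := fun y => by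
      rw [← add_zero (toAdd (P y).2), ← himage _ (hPH y), hx, Set.image_singleton]
    have hinj : Function.Injective fun y => toAdd (P y).2 := fun y z hyz => by
      have hy := hmem y
      have hz := hmem z
      rw [hsingle] at hy
      rw [← show toAdd (P y).2 = toAdd (P z).2 from hyz, hsingle] at hz
      exact hy.trans hz.symm
    have := Nat.card_le_card_of_injective _ hinj
    rw [Nat.card_zmod] at this
    omega
  · -- the unit shift spreads `fiber 0 = Ω` over all fibers, so the lift is transitive
    obtain ⟨g, hg⟩ := hshift
    have hall : ∀ n : ℕ, fiber n = Set.univ := fun n => by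
      induction n with
      | zero => simpa using huniv
      | succ n ih =>
        have := himage _ hg n
        rwa [ih, Set.image_univ_of_surjective g.surjective, toAdd_ofAdd, add_comm,
          ← Nat.cast_succ, eq_comm] at this
    refine hlift (subgroupTransitive_of_forall_exists (x₀, 0) fun ⟨y, c⟩ => ?_)
    obtain ⟨p, hp, hpy, hpc⟩ : y ∈ fiber c := by
      rw [← ZMod.natCast_zmod_val c, hall]
      trivial
    exact ⟨liftPerm p, ⟨p, hp, rfl⟩, by simp [hpy, hpc]⟩

end Block

open Multiplicative in
theorem statement_19_general {Ω : Type*} [Fintype Ω] [DecidableEq Ω] (d k : ℕ) [NeZero k]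
    (hcard : Fintype.card Ω = d) (hd : Odd d)
    (D : Fin k → Multiset ℕ)
    (hsum : ∑ i, nu (D i) = d - 1)
    (α : Fin k → Equiv.Perm Ω) (hα : ∀ i, fullCycleType (α i) = D i)
    (ω : Equiv.Perm Ω) (hω : ω ^ 2 = (List.ofFn α).prod)
    (htrans : SubgroupTransitive (Subgroup.closure (Set.range α ∪ {ω})))
    (hg1 : 1 < (D 0).gcd) (hg2 : (D 0).gcd ∣ d) (hg3 : (D 0).gcd < d) :
    SubgroupImprimitive (Subgroup.closure (Set.range α ∪ {ω})) := by
  set m := (D 0).gcd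
  have : NeZero m := ⟨by omega⟩
  rw [← Nat.card_eq_fintype_card] at hcard
  -- lift `α 0` to `(α 0, +2)`, the other `α i` to `(α i, 0)` and `ω` to `(ω, +1)`, so that the
  -- lifted `ω` still squares to the product of the lifted `α i`
  set p : Fin k → Perm Ω × Multiplicative (ZMod m) :=
    fun i => (α i, ofAdd (Pi.single (M := fun _ => ZMod m) 0 2 i))
  have hG : (closure (Set.range p ∪ {(ω, ofAdd 1)})).map (MonoidHom.fst _ _) =
      closure (Set.range α ∪ {ω}) := by
    rw [MonoidHom.map_closure, Set.image_union, ← Set.range_comp, Set.image_singleton]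
    rfl
  refine ⟨htrans, hG ▸ not_subgroupPrimitive_of_not_subgroupTransitive_map_liftPerm _
    (hcard ▸ hg3) ⟨ω, subset_closure (.inr rfl)⟩ ?_⟩
  refine not_subgroupTransitive_map_liftPerm hg1 (hcard ▸ hd.mul (hd.of_dvd_nat hg2)) p _ ?_ ?_ ?_
  · simp [p, List.prod_ofFn_mk, hω, ← ofAdd_nsmul, ← ofAdd_sum]
  · refine (Finset.sum_le_sum fun i _ => ?_).trans (hsum.trans (by rw [hcard])).le
    exact hα i ▸ card_sub_numCycles_le_nu (α i)
  · rintro i n x hx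
    rcases eq_or_ne i 0 with rfl | hi
    · have hdvd := gcd_fullCycleType_dvd hx
      rw [hα 0] at hdvd
      simp [p, (ZMod.natCast_eq_zero_iff n m).2 hdvd]
    · simp [p, hi]

/-- For `k ≥ 3` and `d` odd not prime, if `G = ⟨α₁,…,αₖ,ω⟩` with
`ω² = α₁⋯αₖ` is transitive, `gcd(D₁)` is a proper divisor of `d` greater than 1, and
`⟨α₁,…,αₖ⟩` is not transitive, then `G` is imprimitive. -/
theorem statement_19 {Ω : Type*} [Fintype Ω] [DecidableEq Ω] (d k : ℕ) [NeZero k]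
    (hcard : Fintype.card Ω = d) (hd : Odd d) (hdpos : 0 < d) (hnp : ¬ d.Prime)
    (hk : 3 ≤ k)
    (D : Fin k → Multiset ℕ) (hP : ∀ i, IsPartitionOf d (D i))
    (hsum : ∑ i, nu (D i) = d - 1)
    (α : Fin k → Equiv.Perm Ω) (hα : ∀ i, fullCycleType (α i) = D i)
    (ω : Equiv.Perm Ω) (hω : ω ^ 2 = (List.ofFn α).prod)
    (htrans : SubgroupTransitive (Subgroup.closure (Set.range α ∪ {ω})))
    (hg1 : 1 < (D 0).gcd) (hg2 : (D 0).gcd ∣ d) (hg3 : (D 0).gcd < d)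
    (hnt : ¬ SubgroupTransitive (Subgroup.closure (Set.range α))) :
    SubgroupImprimitive (Subgroup.closure (Set.range α ∪ {ω})) :=
  statement_19_general d k hcard hd D hsum α hα ω hω htrans hg1 hg2 hg3
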